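/- Let V_0 = {0,1}^{n+1} \ {0, (1,…,1)} and p_H the projection onto H = {Σx_i = 0}. For any u, u' ∈ V_0 with v = p_H(u), v' = p_H(u'), at least one of the following holds: v + v' = 0, or v + v' ∈ p_H(V_0), or max_j(u+u')_j − min_i(u+u')_i = 2. -/

import Mathlib

open Set Filter MeasureTheory Pointwise

/-- The hyperplane `H = {x ∈ ℝ^{n+1} : ∑ xᵢ = 0}`. -/
def Hset (n : ℕ) : Set (Fin (n + 1) → ℝ) := {x | ∑ i, x i = 0}

/-- The root lattice `Aₙ = ℤ^{n+1} ∩ H`. -/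
def Alat (n : ℕ) : Set (Fin (n + 1) → ℝ) :=
  {x | (∀ i, ∃ m : ℤ, x i = (m : ℝ)) ∧ ∑ i, x i = 0}

/-- The Voronoï region of `Aₙ` inside `H`. -/
def VorAn (n : ℕ) : Set (Fin (n + 1) → ℝ) :=
  {z | z ∈ Hset n ∧ ∀ x ∈ Alat n, ∑ i, (z i) ^ 2 ≤ ∑ i, (z i - x i) ^ 2}

/-- Orthogonal projection of `ℝ^{n+1}` onto the hyperplane `H`. -/
noncomputable def pH (n : ℕ) (u : Fin (n + 1) → ℝ) : Fin (n + 1) → ℝ :=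
  fun i => u i - (∑ j, u j) / (n + 1)

/-- `V₀ = {0,1}^{n+1} \ {0, (1,…,1)}`. -/
def V0set (n : ℕ) : Set (Fin (n + 1) → ℝ) :=
  {u | (∀ i, u i = 0 ∨ u i = 1) ∧ u ≠ 0 ∧ u ≠ fun _ => 1}

/-- The vertex set of the Voronoï region of `Aₙ`. -/
noncomputable def VPAn (n : ℕ) : Set (Fin (n + 1) → ℝ) := pH n '' V0set n

/-
The entries of `s = u + u'` lie in `{0, 1, 2}`. If `2` does not occur, `s` is a `0/1` vector;
if `0` does not occur, `s - 1` is one, and `p_H` does not see the shift by a constant. A `0/1`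
vector is either constant, with projection `0`, or lies in `V₀`. If both `0` and `2` occur,
the spread of `s` is `2`.
-/

lemma pH_add (n : ℕ) (u u' : Fin (n + 1) → ℝ) : pH n (u + u') = pH n u + pH n u' := by
  funext i
  simp only [pH, Pi.add_apply, Finset.sum_add_distrib]
  ring

lemma pH_const (n : ℕ) (c : ℝ) : pH n (fun _ => c) = 0 := by
  funext i
  simp only [pH, Finset.sum_const, Finset.card_univ, Fintype.card_fin, nsmul_eq_mul,
    Pi.zero_apply]
  push_cast
  field_simp
  ring

lemma pH_add_const (n : ℕ) (w : Fin (n + 1) → ℝ) (c : ℝ) :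
    pH n (w + fun _ => c) = pH n w := by
  rw [pH_add, pH_const, add_zero]

lemma pH_eq_zero_or_mem_VPAn_of_binary (n : ℕ) {w : Fin (n + 1) → ℝ}
    (hw : ∀ i, w i = 0 ∨ w i = 1) : pH n w = 0 ∨ pH n w ∈ VPAn n := by
  by_cases hzero : w = 0
  · exact .inl (by rw [hzero]; exact pH_const n 0)
  by_cases hone : w = fun _ => 1
  · exact .inl (by rw [hone]; exact pH_const n 1)
  exact .inr ⟨w, ⟨hw, hzero, hone⟩, rfl⟩

lemma ciSup_sub_ciInf_eq_of_attained {ι : Type*} [Finite ι] {f : ι → ℝ} {a b : ℝ}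
    (hlo : ∀ k, a ≤ f k) (hhi : ∀ k, f k ≤ b) {i j : ι} (hi : f i = b) (hj : f j = a) :
    (⨆ k, f k) - (⨅ k, f k) = b - a := by
  have : Nonempty ι := ⟨i⟩
  have hsup : (⨆ k, f k) = b :=
    le_antisymm (ciSup_le hhi) (hi ▸ le_ciSup (Set.finite_range f).bddAbove i)
  have hinf : (⨅ k, f k) = a :=
    le_antisymm (hj ▸ ciInf_le (Set.finite_range f).bddBelow j) (le_ciInf hlo)
  rw [hsup, hinf]

theorem sum_of_vertices_trichotomy_An (n : ℕ) (u u' : Fin (n + 1) → ℝ)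
    (hu : u ∈ V0set n) (hu' : u' ∈ V0set n) :
    pH n u + pH n u' = 0 ∨ pH n u + pH n u' ∈ VPAn n ∨
      (⨆ i, (u + u') i) - (⨅ i, (u + u') i) = 2 := by
  obtain ⟨s, hs⟩ : ∃ s, s = u + u' := ⟨_, rfl⟩
  rw [← pH_add, ← hs]
  have hval : ∀ i, s i = 0 ∨ s i = 1 ∨ s i = 2 := fun i => by
    rcases hu.1 i with h | h <;> rcases hu'.1 i with h' | h' <;> norm_num [hs, h, h']
  by_cases htwo : ∃ i, s i = 2
  · by_cases hzero : ∃ j, s j = 0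
    · obtain ⟨i, hi⟩ := htwo
      obtain ⟨j, hj⟩ := hzero
      have hnonneg : ∀ k, 0 ≤ s k := fun k => by rcases hval k with h | h | h <;> norm_num [h]
      have hle_two : ∀ k, s k ≤ 2 := fun k => by rcases hval k with h | h | h <;> norm_num [h]
      refine .inr (.inr ?_)
      simpa using ciSup_sub_ciInf_eq_of_attained hnonneg hle_two hi hj
    · push Not at hzero
      rw [← sub_add_cancel s fun _ => 1, pH_add_const]
      refine (pH_eq_zero_or_mem_VPAn_of_binary n fun i => ?_).imp_right .inl
      rcases hval i with h | h | h
      · exact absurd h (hzero i)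
      all_goals norm_num [h]
  · push Not at htwo
    refine (pH_eq_zero_or_mem_VPAn_of_binary n fun i => ?_).imp_right .inl
    rcases hval i with h | h | h
    · exact .inl h
    · exact .inr h
    · exact absurd h (htwo i)
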